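/- If 0 < p ≤ q ≤ 1, then for every 1 ≤ n ≤ N², the approximation and Kolmogorov numbers of the natural identity satisfy a_n(S_p^N ↪ S_q^N) = d_n(S_p^N ↪ S_q^N) = 1. -/

import Mathlib

open scoped ENNReal

/-- The (unordered) singular values of a real `N × N` matrix `A`:
the square roots of the eigenvalues of `Aᵀ * A`. -/
noncomputable def singularValues (N : ℕ) (A : Matrix (Fin N) (Fin N) ℝ) : Fin N → ℝ :=
  fun i => Real.sqrt ((show (Matrix.transpose A * A).IsHermitian by
    simpa [Matrix.conjTranspose_eq_transpose_of_trivial] using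
      Matrix.isHermitian_conjTranspose_mul_self A).eigenvalues i)

/-- The Schatten `p`-(quasi-)norm of a real `N × N` matrix, `0 < p ≤ ∞`. -/
noncomputable def schattenNorm (N : ℕ) (p : ℝ≥0∞) (A : Matrix (Fin N) (Fin N) ℝ) : ℝ :=
  if p = ⊤ then ⨆ i, singularValues N A i
  else (∑ i, singularValues N A i ^ p.toReal) ^ (1 / p.toReal)

/-- The `n`-th approximation number of the natural identity `S_p^N → S_q^N`. -/
noncomputable def approxNumber (N : ℕ) (p q : ℝ≥0∞) (n : ℕ) : ℝ :=
  sInf {r : ℝ | ∃ T : Matrix (Fin N) (Fin N) ℝ →ₗ[ℝ] Matrix (Fin N) (Fin N) ℝ,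
    Module.finrank ℝ (LinearMap.range T) < n ∧
    r = sSup {s : ℝ | ∃ A, schattenNorm N p A ≤ 1 ∧ s = schattenNorm N q (A - T A)}}

/-- The `n`-th Gelfand number of the natural identity `S_p^N → S_q^N`. -/
noncomputable def gelfandNumber (N : ℕ) (p q : ℝ≥0∞) (n : ℕ) : ℝ :=
  sInf {r : ℝ | ∃ F : Submodule ℝ (Matrix (Fin N) (Fin N) ℝ),
    N ^ 2 - Module.finrank ℝ F < n ∧
    r = sSup {s : ℝ | ∃ A ∈ F, schattenNorm N p A ≤ 1 ∧ s = schattenNorm N q A}}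

/-- The `n`-th Kolmogorov number of the natural identity `S_p^N → S_q^N`. -/
noncomputable def kolmogorovNumber (N : ℕ) (p q : ℝ≥0∞) (n : ℕ) : ℝ :=
  sInf {r : ℝ | ∃ E : Submodule ℝ (Matrix (Fin N) (Fin N) ℝ),
    Module.finrank ℝ E < n ∧
    r = sSup {s : ℝ | ∃ A, schattenNorm N p A ≤ 1 ∧
      s = sInf {t : ℝ | ∃ B ∈ E, t = schattenNorm N q (A - B)}}}


/-!
Taking `T = 0`, resp. `E = 0`, shows that both numbers are at most
`sup {‖A‖_q : ‖A‖_p ≤ 1} = 1`, since Schatten quasi-norms decrease in the exponent and a rank-one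
partial isometry has all of them equal to `1`.

For the lower bound, a subspace `E` of dimension `< N²` is annihilated by some `U ≠ 0` under the
trace pairing `⟨B, U⟩ = tr (Bᵀ U)`. Rescale `U` to a contraction `W` with `‖W v‖ = 1` for a unit
vector `v`, and put `A = u vᵀ` with `u = W v`. Then `‖A‖_p = 1`, and for `B ∈ E` trace duality gives
`‖A - B‖_q ≥ ‖A - B‖_1 ≥ tr ((A - B)ᵀ W) = tr (Aᵀ W) = uᵀ W v = 1`.
-/

open Matrix
open scoped RealInnerProductSpace

theorem Real.rpow_sum_rpow_le {ι : Type*} (s : Finset ι) {f : ι → ℝ} (hf : ∀ i ∈ s, 0 ≤ f i)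
    {p q : ℝ} (hp : 0 < p) (hpq : p ≤ q) :
    (∑ i ∈ s, f i ^ q) ^ (1 / q) ≤ (∑ i ∈ s, f i ^ p) ^ (1 / p) := by
  classical
  have hq : 0 < q := hp.trans_le hpq
  induction s using Finset.induction_on with
  | empty =>
    simp [Real.zero_rpow (inv_pos.mpr hq).ne', Real.zero_rpow (inv_pos.mpr hp).ne']
  | insert i s hi ih =>
    rw [Finset.forall_mem_insert] at hf
    have hsum : ∀ r : ℝ, 0 ≤ ∑ j ∈ s, f j ^ r := fun r =>
      Finset.sum_nonneg fun j hj => Real.rpow_nonneg (hf.2 j hj) r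
    have hpow : ∀ r : ℝ, 0 < r → ((∑ j ∈ s, f j ^ r) ^ (1 / r)) ^ r = ∑ j ∈ s, f j ^ r :=
      fun r hr => by rw [one_div, Real.rpow_inv_rpow (hsum r) hr.ne']
    rw [Finset.sum_insert hi, Finset.sum_insert hi, ← hpow q hq, ← hpow p hp]
    calc _ ≤ (f i ^ p + ((∑ j ∈ s, f j ^ q) ^ (1 / q)) ^ p) ^ (1 / p) :=
          Real.rpow_add_rpow_le hf.1 (Real.rpow_nonneg (hsum q) _) hp hpq
      _ ≤ _ := by
          have hs := ih hf.2
          gcongr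
          · exact add_nonneg (Real.rpow_nonneg hf.1 p)
              (Real.rpow_nonneg (Real.rpow_nonneg (hsum q) _) p)
          · exact Real.rpow_nonneg (hsum q) _

theorem LinearMap.exists_norm_eq_one_forall_norm_apply_le {E F : Type*} [NormedAddCommGroup E]
    [NormedSpace ℝ E] [FiniteDimensional ℝ E] [Nontrivial E] [NormedAddCommGroup F]
    [NormedSpace ℝ F] (f : E →ₗ[ℝ] F) : ∃ v, ‖v‖ = 1 ∧ ∀ x, ‖f x‖ ≤ ‖f v‖ * ‖x‖ := by
  obtain ⟨v, hv, hmax⟩ := (isCompact_sphere (0 : E) 1).exists_isMaxOn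
    (NormedSpace.sphere_nonempty.mpr zero_le_one)
    f.continuous_of_finiteDimensional.norm.continuousOn
  refine ⟨v, mem_sphere_zero_iff_norm.mp hv, fun x => ?_⟩
  rcases eq_or_ne x 0 with rfl | hx
  · simp
  have hx' : ‖x‖⁻¹ • x ∈ Metric.sphere (0 : E) 1 := by simp [norm_smul, hx]
  have := hmax hx'
  simp only [Set.mem_ofPred_eq, map_smul, norm_smul, norm_inv, norm_norm] at this
  rwa [inv_mul_le_iff₀ (norm_pos_iff.mpr hx), mul_comm] at this

theorem LinearMap.exists_smul_norm_apply_le_of_ne_zero {E F : Type*} [NormedAddCommGroup E]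
    [NormedSpace ℝ E] [FiniteDimensional ℝ E] [NormedAddCommGroup F] [NormedSpace ℝ F]
    {f : E →ₗ[ℝ] F} (hf : f ≠ 0) :
    ∃ c : ℝ, ∃ v, ‖v‖ = 1 ∧ ‖c • f v‖ = 1 ∧ ∀ x, ‖c • f x‖ ≤ ‖x‖ := by
  obtain ⟨x₀, hx₀⟩ := DFunLike.ne_iff.mp hf
  have : Nontrivial E := nontrivial_of_ne x₀ 0 fun h => hx₀ (by simp [h])
  obtain ⟨v, hv, hfv⟩ := f.exists_norm_eq_one_forall_norm_apply_le
  have hc : 0 < ‖f v‖ := by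
    by_contra! h
    refine hf (LinearMap.ext fun x => norm_le_zero_iff.mp ((hfv x).trans ?_))
    exact mul_nonpos_of_nonpos_of_nonneg h (norm_nonneg x)
  refine ⟨‖f v‖⁻¹, v, hv, ?_, fun x => ?_⟩
  · rw [norm_smul, norm_inv, norm_norm, inv_mul_cancel₀ hc.ne']
  · rw [norm_smul, norm_inv, norm_norm, inv_mul_le_iff₀ hc]
    exact hfv x

theorem EuclideanSpace.dotProduct_ofLp_self_eq_one {ι : Type*} [Fintype ι]
    {x : EuclideanSpace ℝ ι} (hx : ‖x‖ = 1) : x.ofLp ⬝ᵥ x.ofLp = 1 := by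
  have h := real_inner_self_eq_norm_sq x
  rwa [hx, one_pow, EuclideanSpace.inner_eq_star_dotProduct, star_trivial] at h

namespace Matrix

theorem isHermitian_transpose_mul_self {m n : Type*} [Fintype m] (X : Matrix m n ℝ) :
    (Xᵀ * X).IsHermitian := by
  simpa [conjTranspose_eq_transpose_of_trivial] using isHermitian_conjTranspose_mul_self X

theorem trace_eq_sum_inner_toEuclideanLin {n ι : Type*} [Fintype n] [DecidableEq n] [Fintype ι]
    (M : Matrix n n ℝ) (b : OrthonormalBasis ι ℝ (EuclideanSpace ℝ n)) :
    M.trace = ∑ i, ⟪b i, toEuclideanLin M (b i)⟫ := by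
  rw [← LinearMap.trace_eq_sum_inner, ← trace_toLin'_eq]
  exact (LinearMap.trace_conj' _ _).symm

theorem inner_toEuclideanLin_transpose_mul {m n : Type*} [Fintype m] [Fintype n] [DecidableEq m]
    [DecidableEq n] (X W : Matrix m n ℝ) (x : EuclideanSpace ℝ n) :
    ⟪x, toEuclideanLin (Xᵀ * W) x⟫ = ⟪toEuclideanLin X x, toEuclideanLin W x⟫ := by
  rw [← conjTranspose_eq_transpose_of_trivial, toLpLin_mul 2 2 2, LinearMap.comp_apply,
    toEuclideanLin_conjTranspose_eq_adjoint, LinearMap.adjoint_inner_right]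

theorem IsHermitian.inner_eigenvectorBasis_toEuclideanLin {n : Type*} [Fintype n] [DecidableEq n]
    {A : Matrix n n ℝ} (hA : A.IsHermitian) (i : n) :
    ⟪hA.eigenvectorBasis i, toEuclideanLin A (hA.eigenvectorBasis i)⟫ = hA.eigenvalues i := by
  rw [hA.eigenvalues_eq i]
  simp [EuclideanSpace.inner_eq_star_dotProduct, dotProduct_comm]

theorem exists_ne_zero_forall_trace_transpose_mul_eq_zero {m n : Type*} [Fintype m] [Fintype n]
    (E : Submodule ℝ (Matrix m n ℝ)) (hE : Module.finrank ℝ E < Fintype.card m * Fintype.card n) :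
    ∃ U : Matrix m n ℝ, U ≠ 0 ∧ ∀ B ∈ E, (Bᵀ * U).trace = 0 := by
  let L : Matrix m n ℝ →ₗ[ℝ] E →ₗ[ℝ] ℝ :=
    (LinearMap.mk₂ ℝ (fun U B : Matrix m n ℝ => (Bᵀ * U).trace)
      (by simp [Matrix.mul_add]) (by simp) (by simp [Matrix.add_mul]) (by simp)).compl₂ E.subtype
  have hker : LinearMap.ker L ≠ ⊥ := LinearMap.ker_ne_bot_of_finrank_lt (by
    rwa [Module.finrank_linearMap, Module.finrank_self, mul_one, Module.finrank_matrix,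
      Module.finrank_self, mul_one])
  obtain ⟨U, hU, hU0⟩ := (Submodule.ne_bot_iff _).mp hker
  exact ⟨U, hU0, fun B hB => LinearMap.congr_fun (LinearMap.mem_ker.mp hU) ⟨B, hB⟩⟩

theorem trace_transpose_vecMulVec_mul {m n : Type*} [Fintype m] [Fintype n] (u : m → ℝ)
    (v : n → ℝ) (W : Matrix m n ℝ) : ((vecMulVec u v)ᵀ * W).trace = u ⬝ᵥ (W *ᵥ v) := by
  rw [transpose_vecMulVec, vecMulVec_mul, trace_vecMulVec, dotProduct_comm, ← dotProduct_mulVec]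

end Matrix

section SchattenNorm

variable {N : ℕ}

theorem singularValues_eq_sqrt (X : Matrix (Fin N) (Fin N) ℝ) (i : Fin N) :
    singularValues N X i = √((isHermitian_transpose_mul_self X).eigenvalues i) := rfl

theorem singularValues_nonneg (X : Matrix (Fin N) (Fin N) ℝ) (i : Fin N) :
    0 ≤ singularValues N X i :=
  Real.sqrt_nonneg _

theorem schattenNorm_of_ne_top {r : ℝ≥0∞} (hr : r ≠ ⊤) (X : Matrix (Fin N) (Fin N) ℝ) :
    schattenNorm N r X = (∑ i, singularValues N X i ^ r.toReal) ^ (1 / r.toReal) :=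
  if_neg hr

theorem schattenNorm_nonneg (r : ℝ≥0∞) (X : Matrix (Fin N) (Fin N) ℝ) :
    0 ≤ schattenNorm N r X := by
  unfold schattenNorm
  split_ifs
  · exact Real.iSup_nonneg (singularValues_nonneg X)
  · exact Real.rpow_nonneg
      (Finset.sum_nonneg fun i _ => Real.rpow_nonneg (singularValues_nonneg X i) _) _

theorem schattenNorm_le_schattenNorm {p q : ℝ≥0∞} (hp : 0 < p) (hpq : p ≤ q) (hq : q ≠ ⊤)
    (X : Matrix (Fin N) (Fin N) ℝ) : schattenNorm N q X ≤ schattenNorm N p X := by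
  have hp' : p ≠ ⊤ := ne_top_of_le_ne_top hq hpq
  rw [schattenNorm_of_ne_top hq, schattenNorm_of_ne_top hp']
  exact Real.rpow_sum_rpow_le _ (fun i _ => singularValues_nonneg X i)
    (ENNReal.toReal_pos hp.ne' hp') (ENNReal.toReal_mono hq hpq)

theorem schattenNorm_one (X : Matrix (Fin N) (Fin N) ℝ) :
    schattenNorm N 1 X = ∑ i, singularValues N X i := by
  simp [schattenNorm_of_ne_top ENNReal.one_ne_top]

theorem sum_singularValues_le_schattenNorm {q : ℝ≥0∞} (hq : 0 < q) (hq1 : q ≤ 1)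
    (X : Matrix (Fin N) (Fin N) ℝ) : ∑ i, singularValues N X i ≤ schattenNorm N q X :=
  schattenNorm_one X ▸ schattenNorm_le_schattenNorm hq hq1 ENNReal.one_ne_top X

theorem singularValues_le_schattenNorm {r : ℝ≥0∞} (hr : 0 < r) (hr' : r ≠ ⊤)
    (X : Matrix (Fin N) (Fin N) ℝ) (i : Fin N) : singularValues N X i ≤ schattenNorm N r X := by
  have hr₀ : 0 < r.toReal := ENNReal.toReal_pos hr.ne' hr'
  rw [schattenNorm_of_ne_top hr']
  calc singularValues N X i = (singularValues N X i ^ r.toReal) ^ (1 / r.toReal) := by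
        rw [one_div, Real.rpow_rpow_inv (singularValues_nonneg X i) hr₀.ne']
    _ ≤ _ := Real.rpow_le_rpow (Real.rpow_nonneg (singularValues_nonneg X i) _)
        (Finset.single_le_sum (f := fun j => singularValues N X j ^ r.toReal)
          (fun j _ => Real.rpow_nonneg (singularValues_nonneg X j) _) (Finset.mem_univ i))
        (by positivity)

theorem schattenNorm_le_mul_schattenNorm {q r : ℝ≥0∞} (hq : 0 < q) (hq' : q ≠ ⊤) (hr : 0 < r)
    (hr' : r ≠ ⊤) (X : Matrix (Fin N) (Fin N) ℝ) :
    schattenNorm N q X ≤ (N : ℝ) ^ (1 / q.toReal) * schattenNorm N r X := by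
  have hq₀ : 0 < q.toReal := ENNReal.toReal_pos hq.ne' hq'
  have hS := schattenNorm_nonneg r X
  calc schattenNorm N q X ≤ (N * schattenNorm N r X ^ q.toReal) ^ (1 / q.toReal) := by
        rw [schattenNorm_of_ne_top hq']
        gcongr
        · exact Finset.sum_nonneg fun i _ => Real.rpow_nonneg (singularValues_nonneg X i) _
        · calc _ ≤ ∑ _i : Fin N, schattenNorm N r X ^ q.toReal := by
                gcongr with i
                · exact singularValues_nonneg X i
                · exact singularValues_le_schattenNorm hr hr' X i
            _ = _ := by simp
    _ = _ := by
        rw [Real.mul_rpow (Nat.cast_nonneg N) (Real.rpow_nonneg hS _), one_div,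
          Real.rpow_rpow_inv hS hq₀.ne']

theorem singularValues_eq_norm (X : Matrix (Fin N) (Fin N) ℝ) (i : Fin N) :
    singularValues N X i =
      ‖toEuclideanLin X ((isHermitian_transpose_mul_self X).eigenvectorBasis i)‖ := by
  rw [singularValues_eq_sqrt,
    ← (isHermitian_transpose_mul_self X).inner_eigenvectorBasis_toEuclideanLin,
    inner_toEuclideanLin_transpose_mul, real_inner_self_eq_norm_sq, Real.sqrt_sq (norm_nonneg _)]

theorem sum_singularValues_sq (X : Matrix (Fin N) (Fin N) ℝ) :
    ∑ i, singularValues N X i ^ 2 = (Xᵀ * X).trace := by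
  simp_rw [trace_eq_sum_inner_toEuclideanLin _ (isHermitian_transpose_mul_self X).eigenvectorBasis,
    inner_toEuclideanLin_transpose_mul, real_inner_self_eq_norm_sq, singularValues_eq_norm]

theorem trace_transpose_mul_le_sum_singularValues (X W : Matrix (Fin N) (Fin N) ℝ)
    (hW : ∀ x, ‖toEuclideanLin W x‖ ≤ ‖x‖) :
    (Xᵀ * W).trace ≤ ∑ i, singularValues N X i := by
  set b := (isHermitian_transpose_mul_self X).eigenvectorBasis
  rw [trace_eq_sum_inner_toEuclideanLin _ b]
  gcongr with i
  rw [inner_toEuclideanLin_transpose_mul, singularValues_eq_norm]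
  calc _ ≤ ‖toEuclideanLin X (b i)‖ * ‖toEuclideanLin W (b i)‖ := real_inner_le_norm _ _
    _ ≤ ‖toEuclideanLin X (b i)‖ :=
      mul_le_of_le_one_right (norm_nonneg _) ((hW _).trans_eq (b.orthonormal.1 i))

theorem schattenNorm_eq_one_of_isIdempotentElem {X : Matrix (Fin N) (Fin N) ℝ}
    (hX : IsIdempotentElem (Xᵀ * X)) (htr : (Xᵀ * X).trace = 1) {r : ℝ≥0∞} (hr : 0 < r)
    (hr' : r ≠ ⊤) : schattenNorm N r X = 1 := by
  have hσ : ∀ i, singularValues N X i = 0 ∨ singularValues N X i = 1 := fun i => by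
    have h := hX.spectrum_subset ℝ
      ((isHermitian_transpose_mul_self X).eigenvalues_mem_spectrum_real i)
    rw [Set.mem_insert_iff, Set.mem_singleton_iff] at h
    rcases h with h | h <;> simp [singularValues_eq_sqrt, h]
  have hpow : ∀ i, singularValues N X i ^ r.toReal = singularValues N X i ^ 2 := fun i => by
    rcases hσ i with h | h
    · simp [h, Real.zero_rpow (ENNReal.toReal_pos hr.ne' hr').ne']
    · simp [h]
  simp [schattenNorm_of_ne_top hr', hpow, sum_singularValues_sq, htr]

theorem schattenNorm_vecMulVec {u v : Fin N → ℝ} (hu : u ⬝ᵥ u = 1) (hv : v ⬝ᵥ v = 1) {r : ℝ≥0∞}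
    (hr : 0 < r) (hr' : r ≠ ⊤) : schattenNorm N r (vecMulVec u v) = 1 := by
  have hA : (vecMulVec u v)ᵀ * vecMulVec u v = vecMulVec v v := by
    rw [transpose_vecMulVec, vecMulVec_mul_vecMulVec, hu, one_smul]
  refine schattenNorm_eq_one_of_isIdempotentElem ?_ ?_ hr hr'
  · rw [hA, IsIdempotentElem, vecMulVec_mul_vecMulVec, hv, one_smul]
  · rw [hA, trace_vecMulVec, hv]

theorem exists_schattenNorm_eq_one_forall_one_le_sum_singularValues_sub
    (E : Submodule ℝ (Matrix (Fin N) (Fin N) ℝ)) (hE : Module.finrank ℝ E < N ^ 2) :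
    ∃ A : Matrix (Fin N) (Fin N) ℝ, (∀ r : ℝ≥0∞, 0 < r → r ≠ ⊤ → schattenNorm N r A = 1) ∧
      ∀ B ∈ E, 1 ≤ ∑ i, singularValues N (A - B) i := by
  obtain ⟨U, hU0, hUE⟩ :=
    exists_ne_zero_forall_trace_transpose_mul_eq_zero E (by simpa [sq] using hE)
  obtain ⟨c, v, hv, hu, hW⟩ :=
    LinearMap.exists_smul_norm_apply_le_of_ne_zero (toEuclideanLin.map_ne_zero_iff.mpr hU0)
  simp_rw [← LinearMap.smul_apply, ← map_smul] at hu hW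
  set W := c • U
  set u := toEuclideanLin W v
  have huu := EuclideanSpace.dotProduct_ofLp_self_eq_one hu
  refine ⟨vecMulVec u.ofLp v.ofLp, fun r hr hr' =>
    schattenNorm_vecMulVec huu (EuclideanSpace.dotProduct_ofLp_self_eq_one hv) hr hr',
    fun B hB => ?_⟩
  calc (1 : ℝ) = ((vecMulVec u.ofLp v.ofLp - B)ᵀ * W).trace := by
        rw [transpose_sub, Matrix.sub_mul, trace_sub, trace_transpose_vecMulVec_mul,
          Matrix.mul_smul, trace_smul, hUE B hB, smul_zero, sub_zero]
        exact huu.symm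
    _ ≤ _ := trace_transpose_mul_le_sum_singularValues _ _ hW

section Frobenius

attribute [local instance] Matrix.frobeniusNormedAddCommGroup Matrix.frobeniusNormedSpace

theorem frobenius_norm_eq_schattenNorm_two (X : Matrix (Fin N) (Fin N) ℝ) :
    ‖X‖ = schattenNorm N 2 X := by
  have h := sum_singularValues_sq X
  simp only [trace, diag, mul_apply, transpose_apply, ← sq] at h
  rw [frobenius_norm_def, schattenNorm_of_ne_top ENNReal.ofNat_ne_top, Finset.sum_comm]
  simp only [Real.norm_eq_abs, sq_abs, Real.rpow_two, ENNReal.toReal_ofNat, h]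

theorem bddAbove_schattenNorm_sub_apply
    (T : Matrix (Fin N) (Fin N) ℝ →ₗ[ℝ] Matrix (Fin N) (Fin N) ℝ)
    {p q : ℝ≥0∞} (hp : 0 < p) (hp2 : p ≤ 2) (hq : 0 < q) (hq' : q ≠ ⊤) :
    BddAbove {s | ∃ A, schattenNorm N p A ≤ 1 ∧ s = schattenNorm N q (A - T A)} := by
  set L := LinearMap.id - T
  obtain ⟨C, hC0, hC⟩ := SemilinearMapClass.bound_of_continuous L L.continuous_of_finiteDimensional
  refine ⟨(N : ℝ) ^ (1 / q.toReal) * C, ?_⟩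
  rintro s ⟨A, hA, rfl⟩
  have hA₂ : ‖A‖ ≤ 1 := by
    rw [frobenius_norm_eq_schattenNorm_two]
    exact (schattenNorm_le_schattenNorm hp hp2 ENNReal.ofNat_ne_top A).trans hA
  calc schattenNorm N q (A - T A) ≤ (N : ℝ) ^ (1 / q.toReal) * ‖L A‖ := by
        rw [frobenius_norm_eq_schattenNorm_two]
        exact schattenNorm_le_mul_schattenNorm hq hq' (by norm_num) ENNReal.ofNat_ne_top _
    _ ≤ _ := by
        gcongr
        exact (hC A).trans (mul_le_of_le_one_right hC0.le hA₂)

end Frobenius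

variable {p q : ℝ≥0∞} {n : ℕ}

theorem isGreatest_schattenNorm_of_schattenNorm_le_one [NeZero N] (hp : 0 < p) (hpq : p ≤ q)
    (hq : q ≠ ⊤) : IsGreatest {s | ∃ A, schattenNorm N p A ≤ 1 ∧ s = schattenNorm N q A} 1 := by
  have he : (Pi.single 0 1 : Fin N → ℝ) ⬝ᵥ Pi.single 0 1 = 1 := by simp
  refine ⟨⟨vecMulVec (Pi.single 0 1) (Pi.single 0 1),
    (schattenNorm_vecMulVec he he hp (ne_top_of_le_ne_top hq hpq)).le,
    (schattenNorm_vecMulVec he he (hp.trans_le hpq) hq).symm⟩, ?_⟩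
  rintro s ⟨A, hA, rfl⟩
  exact (schattenNorm_le_schattenNorm hp hpq hq A).trans hA

theorem approxNumber_eq_one [NeZero N] (hp : 0 < p) (hpq : p ≤ q) (hq : q ≤ 1) (hn : 1 ≤ n)
    (hnN : n ≤ N ^ 2) : approxNumber N p q n = 1 := by
  have hq' : q ≠ ⊤ := ne_top_of_le_ne_top ENNReal.one_ne_top hq
  refine IsLeast.csInf_eq ⟨⟨0, by rwa [LinearMap.range_zero, finrank_bot], ?_⟩, ?_⟩
  · simpa using (isGreatest_schattenNorm_of_schattenNorm_le_one hp hpq hq').csSup_eq.symm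
  · rintro r ⟨T, hT, rfl⟩
    obtain ⟨A, hA, hAT⟩ := exists_schattenNorm_eq_one_forall_one_le_sum_singularValues_sub
      (LinearMap.range T) (hT.trans_le hnN)
    have hbdd := bddAbove_schattenNorm_sub_apply T hp (hpq.trans (hq.trans one_le_two))
      (hp.trans_le hpq) hq'
    calc (1 : ℝ) ≤ schattenNorm N q (A - T A) :=
          (hAT _ (LinearMap.mem_range_self T A)).trans
            (sum_singularValues_le_schattenNorm (hp.trans_le hpq) hq _)
      _ ≤ _ := le_csSup hbdd ⟨A, (hA p hp (ne_top_of_le_ne_top hq' hpq)).le, rfl⟩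

theorem kolmogorovNumber_eq_one [NeZero N] (hp : 0 < p) (hpq : p ≤ q) (hq : q ≤ 1)
    (hn : 1 ≤ n) (hnN : n ≤ N ^ 2) : kolmogorovNumber N p q n = 1 := by
  have hq' : q ≠ ⊤ := ne_top_of_le_ne_top ENNReal.one_ne_top hq
  have hdist_le : ∀ (E : Submodule ℝ (Matrix (Fin N) (Fin N) ℝ)) A,
      sInf {t | ∃ B ∈ E, t = schattenNorm N q (A - B)} ≤ schattenNorm N q A := fun E A =>
    csInf_le ⟨0, by rintro t ⟨B, -, rfl⟩; exact schattenNorm_nonneg q _⟩ ⟨0, E.zero_mem, by simp⟩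
  refine IsLeast.csInf_eq ⟨⟨⊥, by rwa [finrank_bot], ?_⟩, ?_⟩
  · simpa using (isGreatest_schattenNorm_of_schattenNorm_le_one hp hpq hq').csSup_eq.symm
  · rintro r ⟨E, hE, rfl⟩
    obtain ⟨A, hA, hAE⟩ :=
      exists_schattenNorm_eq_one_forall_one_le_sum_singularValues_sub E (hE.trans_le hnN)
    have hbdd : BddAbove {s | ∃ A, schattenNorm N p A ≤ 1 ∧
        s = sInf {t | ∃ B ∈ E, t = schattenNorm N q (A - B)}} := ⟨1, by
      rintro s ⟨A', hA', rfl⟩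
      exact (hdist_le E A').trans ((schattenNorm_le_schattenNorm hp hpq hq' A').trans hA')⟩
    calc (1 : ℝ) ≤ sInf {t | ∃ B ∈ E, t = schattenNorm N q (A - B)} := by
          refine le_csInf ⟨_, 0, E.zero_mem, rfl⟩ ?_
          rintro t ⟨B, hB, rfl⟩
          exact (hAE B hB).trans (sum_singularValues_le_schattenNorm (hp.trans_le hpq) hq _)
      _ ≤ _ := le_csSup hbdd ⟨A, (hA p hp (ne_top_of_le_ne_top hq' hpq)).le, rfl⟩

end SchattenNorm

/-- If `0 < p ≤ q ≤ 1`, then for every `1 ≤ n ≤ N²` the approximation and Kolmogorov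
numbers of the natural identity satisfy `a_n(S_p^N ↪ S_q^N) = d_n(S_p^N ↪ S_q^N) = 1`. -/
theorem approx_kolmogorov_eq_one (N : ℕ) (p q : ℝ≥0∞)
    (hp0 : 0 < p) (hpq : p ≤ q) (hq1 : q ≤ 1)
    (n : ℕ) (hn1 : 1 ≤ n) (hn2 : n ≤ N ^ 2) :
    approxNumber N p q n = 1 ∧ kolmogorovNumber N p q n = 1 := by
  have : NeZero N := ⟨by rintro rfl; simp at hn2; omega⟩
  exact ⟨approxNumber_eq_one hp0 hpq hq1 hn1 hn2, kolmogorovNumber_eq_one hp0 hpq hq1 hn1 hn2⟩
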